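/- Anti-causal label-shift bound: suppose the source and target distributions share conditional distributions, i.e., P^S = sum_{y=1}^M p_Y^S(y) pi_y and P^T = sum_{y=1}^M p_Y^T(y) pi_y for common conditional measures pi_y, and f^S, f^T map into Delta^{M-1} subset of R^M. Then for p >= 1, W_p^p(f^S # P^S, f^T # P^T) <= M^p * ||p_Y^S - p_Y^T||_1 + min{ E_{P^S}[||f^S - f^T||_p^p], E_{P^T}[||f^S - f^T||_p^p] }. -/

import Mathlib

open MeasureTheory ENNReal

/-!
Split each label weight as `p_Y^S(y) = min(p_Y^S(y), p_Y^T(y)) + a^S(y)`, and likewise for the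
target. The common part `∑_y min(p_Y^S(y), p_Y^T(y)) π_y` is transported to itself along the
diagonal, at cost at most either expectation of `‖f^S - f^T‖_p^p`. The leftovers have equal mass
`∑_y a^S(y) ≤ ‖p_Y^S - p_Y^T‖_1` and are coupled by a rescaled product measure, on which the
cost is at most `M ≤ M^p`, since points of the simplex differ by at most `1` in each coordinate.
-/

/-- Kantorovich optimal transport cost between `μ` and `ν` for cost `c`:
infimum over all couplings (joint measures with the given marginals). -/
noncomputable def transportCost {X Y : Type*} [MeasurableSpace X] [MeasurableSpace Y]
    (c : X → Y → ℝ≥0∞) (μ : Measure X) (ν : Measure Y) : ℝ≥0∞ :=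
  ⨅ (γ : Measure (X × Y)) (_ : γ.map Prod.fst = μ ∧ γ.map Prod.snd = ν),
    ∫⁻ q, c q.1 q.2 ∂γ

section Transport

variable {X Y : Type*} [MeasurableSpace X] [MeasurableSpace Y]

theorem transportCost_le_lintegral {c : X → Y → ℝ≥0∞} {μ : Measure X} {ν : Measure Y}
    (γ : Measure (X × Y)) (hγ₁ : γ.map Prod.fst = μ) (hγ₂ : γ.map Prod.snd = ν) :
    transportCost c μ ν ≤ ∫⁻ q, c q.1 q.2 ∂γ :=
  iInf₂_le γ ⟨hγ₁, hγ₂⟩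

theorem transportCost_map_le {X' Y' : Type*} [MeasurableSpace X'] [MeasurableSpace Y']
    {c : X' → Y' → ℝ≥0∞} (hc : Measurable (Function.uncurry c)) {f : X → X'} {g : Y → Y'}
    (hf : Measurable f) (hg : Measurable g) (μ : Measure X) (ν : Measure Y) :
    transportCost c (μ.map f) (ν.map g) ≤ transportCost (fun x y => c (f x) (g y)) μ ν := by
  refine le_iInf₂ fun γ ⟨hγ₁, hγ₂⟩ => ?_
  have hfg : Measurable (Prod.map f g) := hf.prodMap hg
  calc transportCost c (μ.map f) (ν.map g)
      ≤ ∫⁻ q, c q.1 q.2 ∂γ.map (Prod.map f g) := by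
        refine transportCost_le_lintegral _ ?_ ?_
        · rw [Measure.map_map measurable_fst hfg, ← hγ₁, Measure.map_map hf measurable_fst]
          rfl
        · rw [Measure.map_map measurable_snd hfg, ← hγ₂, Measure.map_map hg measurable_snd]
          rfl
    _ = ∫⁻ q, c (f q.1) (g q.2) ∂γ := lintegral_map hc hfg

theorem exists_coupling_of_measure_univ_eq (μ : Measure X) (ν : Measure Y) [IsFiniteMeasure μ]
    [IsFiniteMeasure ν] (h : μ Set.univ = ν Set.univ) :
    ∃ γ : Measure (X × Y), γ.map Prod.fst = μ ∧ γ.map Prod.snd = ν ∧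
      γ Set.univ = μ Set.univ := by
  rcases eq_or_ne (μ Set.univ) 0 with h₀ | h₀
  · refine ⟨0, ?_, ?_, ?_⟩
    · simp [Measure.measure_univ_eq_zero.1 h₀]
    · simp [Measure.measure_univ_eq_zero.1 (h ▸ h₀)]
    · simp [h₀]
  have hcancel : (μ Set.univ)⁻¹ * μ Set.univ = 1 := ENNReal.inv_mul_cancel h₀ (measure_ne_top _ _)
  refine ⟨(μ Set.univ)⁻¹ • μ.prod ν, ?_, ?_, ?_⟩
  · rw [Measure.map_smul, Measure.map_fst_prod, ← h, smul_smul, hcancel, one_smul]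
  · rw [Measure.map_smul, Measure.map_snd_prod, smul_smul, hcancel, one_smul]
  · rw [Measure.smul_apply, ← Set.univ_prod_univ, Measure.prod_prod, smul_eq_mul, ← mul_assoc,
      hcancel, one_mul, h]

theorem transportCost_add_le {c : X → X → ℝ≥0∞} (hc : Measurable (Function.uncurry c))
    {K : ℝ≥0∞} (hcK : ∀ x y, c x y ≤ K) (C μ ν : Measure X) [IsFiniteMeasure μ]
    [IsFiniteMeasure ν] (h : μ Set.univ = ν Set.univ) :
    transportCost c (C + μ) (C + ν) ≤ K * μ Set.univ + ∫⁻ x, c x x ∂C := by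
  obtain ⟨γ, hγ₁, hγ₂, hγ⟩ := exists_coupling_of_measure_univ_eq μ ν h
  have hdiag : Measurable fun x : X => (x, x) := measurable_id.prodMk measurable_id
  have hdiag₁ : (C.map fun x => (x, x)).map Prod.fst = C := by
    simpa [Measure.fst] using Measure.fst_map_prodMk (X := id) (μ := C) measurable_id
  have hdiag₂ : (C.map fun x => (x, x)).map Prod.snd = C := by
    simpa [Measure.snd] using Measure.snd_map_prodMk (Y := id) (μ := C) measurable_id
  calc transportCost c (C + μ) (C + ν)
      ≤ ∫⁻ q, c q.1 q.2 ∂(C.map (fun x => (x, x)) + γ) := by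
        refine transportCost_le_lintegral _ ?_ ?_
        · rw [Measure.map_add _ _ measurable_fst, hdiag₁, hγ₁]
        · rw [Measure.map_add _ _ measurable_snd, hdiag₂, hγ₂]
    _ = ∫⁻ x, c x x ∂C + ∫⁻ q, c q.1 q.2 ∂γ := by
        rw [lintegral_add_measure]
        exact congrArg (· + _) (lintegral_map hc hdiag)
    _ ≤ ∫⁻ x, c x x ∂C + ∫⁻ _, K ∂γ := by gcongr with q; exact hcK q.1 q.2
    _ = K * μ Set.univ + ∫⁻ x, c x x ∂C := by rw [lintegral_const, hγ, add_comm]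

end Transport

section Mixture

variable {X ι : Type*} [MeasurableSpace X] [Fintype ι] (π : ι → Measure X)

theorem sum_ofReal_smul_apply_univ [∀ y, IsProbabilityMeasure (π y)] {w : ι → ℝ}
    (hw : ∀ y, 0 ≤ w y) :
    (∑ y, ENNReal.ofReal (w y) • π y) Set.univ = ENNReal.ofReal (∑ y, w y) := by
  simp [Measure.finsetSum_apply, ENNReal.ofReal_sum_of_nonneg fun y _ => hw y]

theorem isFiniteMeasure_sum_ofReal_smul [∀ y, IsProbabilityMeasure (π y)] {w : ι → ℝ}
    (hw : ∀ y, 0 ≤ w y) : IsFiniteMeasure (∑ y, ENNReal.ofReal (w y) • π y) :=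
  ⟨by rw [sum_ofReal_smul_apply_univ π hw]; exact ofReal_lt_top⟩

theorem sum_ofReal_smul_eq_add_sub {v w : ι → ℝ} (hv : ∀ y, 0 ≤ v y) (hvw : ∀ y, v y ≤ w y) :
    ∑ y, ENNReal.ofReal (w y) • π y =
      ∑ y, ENNReal.ofReal (v y) • π y + ∑ y, ENNReal.ofReal (w y - v y) • π y := by
  rw [← Finset.sum_add_distrib]
  refine Finset.sum_congr rfl fun y _ => ?_
  rw [← add_smul, ← ENNReal.ofReal_add (hv y) (sub_nonneg.2 (hvw y)), add_sub_cancel]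

end Mixture

theorem sub_min_le_abs_sub (a b : ℝ) : a - min a b ≤ |a - b| := by
  rw [abs_sub_comm, ← max_sub_min_eq_abs]
  exact sub_le_sub_right (le_max_left a b) _

theorem sum_ofReal_abs_sub_rpow_le_card {ι : Type*} [Fintype ι] {u v : ι → ℝ}
    (hu : u ∈ stdSimplex ℝ ι) (hv : v ∈ stdSimplex ℝ ι) {p : ℝ} (hp : 0 ≤ p) :
    ∑ i, ENNReal.ofReal (|u i - v i| ^ p) ≤ Fintype.card ι := by
  have hle : ∀ i, |u i - v i| ≤ 1 := fun i =>
    abs_sub_le_of_nonneg_of_le (hu.1 i) (mem_Icc_of_mem_stdSimplex hu i).2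
      (hv.1 i) (mem_Icc_of_mem_stdSimplex hv i).2
  calc ∑ i, ENNReal.ofReal (|u i - v i| ^ p)
      ≤ ∑ _i : ι, (1 : ℝ≥0∞) := Finset.sum_le_sum fun i _ =>
        ENNReal.ofReal_le_one.2 (Real.rpow_le_one (abs_nonneg _) (hle i) hp)
    _ = Fintype.card ι := by simp

theorem natCast_le_rpow (n : ℕ) {p : ℝ} (hp : 1 ≤ p) : (n : ℝ) ≤ (n : ℝ) ^ p := by
  rcases Nat.eq_zero_or_pos n with rfl | hn
  · simpa using Real.rpow_nonneg le_rfl p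
  · exact Real.self_le_rpow_of_one_le (by exact_mod_cast hn) hp

theorem stmt14_general {X : Type*} [MeasurableSpace X] (M : ℕ) (p : ℝ) (hp : 1 ≤ p)
    (π : Fin M → Measure X) [∀ y, IsProbabilityMeasure (π y)]
    (pS pT : Fin M → ℝ) (hpS0 : ∀ y, 0 ≤ pS y) (hpT0 : ∀ y, 0 ≤ pT y)
    (hpS1 : ∑ y, pS y = 1) (hpT1 : ∑ y, pT y = 1)
    (fS fT : X → Fin M → ℝ) (hfS : Measurable fS) (hfT : Measurable fT)
    (hfSsimp : ∀ x, (∀ i, 0 ≤ fS x i) ∧ ∑ i, fS x i = 1)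
    (hfTsimp : ∀ x, (∀ i, 0 ≤ fT x i) ∧ ∑ i, fT x i = 1) :
    transportCost (fun u v => ∑ i, ENNReal.ofReal (|u i - v i| ^ p))
        ((∑ y, ENNReal.ofReal (pS y) • π y).map fS)
        ((∑ y, ENNReal.ofReal (pT y) • π y).map fT)
      ≤ ENNReal.ofReal ((M : ℝ) ^ p) * ENNReal.ofReal (∑ y, |pS y - pT y|)
        + min
          (∫⁻ x, ∑ i, ENNReal.ofReal (|fS x i - fT x i| ^ p)
              ∂(∑ y, ENNReal.ofReal (pS y) • π y))
          (∫⁻ x, ∑ i, ENNReal.ofReal (|fS x i - fT x i| ^ p)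
              ∂(∑ y, ENNReal.ofReal (pT y) • π y)) := by
  set m : Fin M → ℝ := fun y => min (pS y) (pT y)
  have hm : ∀ y, 0 ≤ m y := fun y => le_min (hpS0 y) (hpT0 y)
  have hS := sum_ofReal_smul_eq_add_sub π hm fun y => min_le_left (pS y) (pT y)
  have hT := sum_ofReal_smul_eq_add_sub π hm fun y => min_le_right (pS y) (pT y)
  have haS : ∀ y, 0 ≤ pS y - m y := fun y => sub_nonneg.2 (min_le_left _ _)
  have haT : ∀ y, 0 ≤ pT y - m y := fun y => sub_nonneg.2 (min_le_right _ _)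
  have := isFiniteMeasure_sum_ofReal_smul π haS
  have := isFiniteMeasure_sum_ofReal_smul π haT
  have hmass : (∑ y, ENNReal.ofReal (pS y - m y) • π y) Set.univ
      = (∑ y, ENNReal.ofReal (pT y - m y) • π y) Set.univ := by
    simp only [sum_ofReal_smul_apply_univ π haS, sum_ofReal_smul_apply_univ π haT,
      Finset.sum_sub_distrib, hpS1, hpT1]
  have hcost : ∀ x y : X, ∑ i, ENNReal.ofReal (|fS x i - fT y i| ^ p)
      ≤ ENNReal.ofReal ((M : ℝ) ^ p) := fun x y =>
    (sum_ofReal_abs_sub_rpow_le_card (hfSsimp x) (hfTsimp y) (by linarith)).trans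
      (by simpa using ENNReal.ofReal_le_ofReal (natCast_le_rpow M hp))
  refine (transportCost_map_le (by fun_prop) hfS hfT _ _).trans ?_
  rw [hS, hT]
  refine (transportCost_add_le (by fun_prop) hcost _ _ _ hmass).trans ?_
  gcongr
  · rw [sum_ofReal_smul_apply_univ π haS]
    exact ENNReal.ofReal_le_ofReal (Finset.sum_le_sum fun y _ => sub_min_le_abs_sub _ _)
  · exact le_min (lintegral_mono' (Measure.le_add_right le_rfl) le_rfl)
      (lintegral_mono' (Measure.le_add_right le_rfl) le_rfl)

/-- anti-causal label-shift bound: if `P^S = ∑_y p_Y^S(y) π_y` and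
`P^T = ∑_y p_Y^T(y) π_y` share the conditionals `π_y`, and `f^S, f^T` map into the simplex
`Δ^{M-1} ⊆ ℝ^M`, then
`W_p^p(f^S # P^S, f^T # P^T) ≤ M^p ‖p_Y^S - p_Y^T‖_1 + min(E_{P^S}‖f^S - f^T‖_p^p, E_{P^T}‖f^S - f^T‖_p^p)`. -/
theorem stmt14 {X : Type*} [MeasurableSpace X] (M : ℕ) (hM : 0 < M) (p : ℝ) (hp : 1 ≤ p)
    (π : Fin M → Measure X) [∀ y, IsProbabilityMeasure (π y)]
    (pS pT : Fin M → ℝ) (hpS0 : ∀ y, 0 ≤ pS y) (hpT0 : ∀ y, 0 ≤ pT y)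
    (hpS1 : ∑ y, pS y = 1) (hpT1 : ∑ y, pT y = 1)
    (fS fT : X → Fin M → ℝ) (hfS : Measurable fS) (hfT : Measurable fT)
    (hfSsimp : ∀ x, (∀ i, 0 ≤ fS x i) ∧ ∑ i, fS x i = 1)
    (hfTsimp : ∀ x, (∀ i, 0 ≤ fT x i) ∧ ∑ i, fT x i = 1) :
    transportCost (fun u v => ∑ i, ENNReal.ofReal (|u i - v i| ^ p))
        ((∑ y, ENNReal.ofReal (pS y) • π y).map fS)
        ((∑ y, ENNReal.ofReal (pT y) • π y).map fT)
      ≤ ENNReal.ofReal ((M : ℝ) ^ p) * ENNReal.ofReal (∑ y, |pS y - pT y|)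
        + min
          (∫⁻ x, ∑ i, ENNReal.ofReal (|fS x i - fT x i| ^ p)
              ∂(∑ y, ENNReal.ofReal (pS y) • π y))
          (∫⁻ x, ∑ i, ENNReal.ofReal (|fS x i - fT x i| ^ p)
              ∂(∑ y, ENNReal.ofReal (pT y) • π y)) :=
  stmt14_general M p hp π pS pT hpS0 hpT0 hpS1 hpT1 fS fT hfS hfT hfSsimp hfTsimp
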